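/- arXiv:1510.04348 — 4 statements merged into one kernel-verified Lean document; each statement's English description precedes it below -/
import Mathlib

section
/- Let c > 0 be a real number. For all integers r ≥ 1 and N ≥ 1 satisfying r − 1 ≤ c·log N, one has Σ_{a ≤ N} τ_r(a) ≤ ((1+c)^{r−1}/(r−1)!) · N · (log N)^{r−1}, where a runs over positive integers ≤ N. -/
open Finset

/-- `τ_r(a)`: the number of ordered `r`-tuples `(a₁, …, a_r)` of positive integers with
`a₁ ⋯ a_r = a`. (For `a ≥ 1` every factor automatically lies in `[1, a]`.) -/
def tau (r a : ℕ) : ℕ :=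
  ((Fintype.piFinset (fun _ : Fin r => Finset.Icc 1 a)).filter (fun f => ∏ i, f i = a)).card

/-- `τ'_r(a)`: the number of ordered `r`-tuples `(a₁, …, a_r)` of positive integers with
`a₁ ⋯ a_r = a` and each `aᵢ ≤ N`. -/
def tau' (r N a : ℕ) : ℕ :=
  ((Fintype.piFinset (fun _ : Fin r => Finset.Icc 1 N)).filter (fun f => ∏ i, f i = a)).card

def T (r N : ℕ) : ℕ :=
  ((Fintype.piFinset (fun _ : Fin r => Finset.Icc 1 N)).filter (fun f => ∏ i, f i ≤ N)).card

lemma tau_eq_tau' (r a M : ℕ) (ha : 1 ≤ a) (haM : a ≤ M) : tau r a = tau' r M a := by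
  unfold tau tau'
  congr 1
  ext f
  simp only [Finset.mem_filter, Fintype.mem_piFinset, Finset.mem_Icc]
  constructor
  · rintro ⟨h1, h2⟩
    exact ⟨fun i => ⟨(h1 i).1, le_trans (h1 i).2 haM⟩, h2⟩
  · rintro ⟨h1, h2⟩
    refine ⟨fun i => ⟨(h1 i).1, ?_⟩, h2⟩
    calc f i ≤ ∏ j, f j := Finset.single_le_prod' (fun j _ => (h1 j).1) (Finset.mem_univ i)
    _ = a := h2

lemma sum_tau'_eq_T (r N : ℕ) : ∑ a ∈ Finset.Icc 1 N, tau' r N a = T r N := by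
  unfold tau' T
  rw [Finset.card_eq_sum_card_fiberwise
    (f := fun f : Fin r → ℕ => ∏ i, f i) (t := Finset.Icc 1 N) ?_]
  · apply Finset.sum_congr rfl
    intro a ha
    congr 1
    rw [Finset.filter_filter]
    apply Finset.filter_congr
    intro f _
    simp only [Finset.mem_Icc] at ha
    constructor
    · intro h; exact ⟨h ▸ ha.2, h⟩
    · exact fun h => h.2
  · intro f hf
    simp only [Finset.mem_coe, Finset.mem_filter, Fintype.mem_piFinset, Finset.mem_Icc] at hf
    simp only [Finset.mem_coe, Finset.mem_Icc]
    exact ⟨Finset.one_le_prod' (fun i _ => (hf.1 i).1), hf.2⟩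

lemma T_succ (r N : ℕ) : T (r + 1) N = ∑ d ∈ Finset.Icc 1 N, T r (N / d) := by
  unfold T
  rw [Finset.card_eq_sum_card_fiberwise
    (f := fun f : Fin (r+1) → ℕ => f 0) (t := Finset.Icc 1 N) ?_]
  · apply Finset.sum_congr rfl
    intro d hd
    simp only [Finset.mem_Icc] at hd
    have hd0 : 0 < d := hd.1
    refine Finset.card_bij' (fun f _ => Fin.tail f) (fun g _ => Fin.cons d g)
      ?hi ?hj ?left ?right
    case hi =>
      intro f hf
      simp only [Finset.mem_filter, Fintype.mem_piFinset, Finset.mem_Icc] at hf ⊢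
      obtain ⟨⟨hmem, hprod⟩, hf0⟩ := hf
      have hprod' : d * ∏ i : Fin r, f i.succ ≤ N := by
        rw [← hf0]; rw [Fin.prod_univ_succ] at hprod; exact hprod
      have htail : ∏ i : Fin r, Fin.tail f i ≤ N / d := by
        rw [Nat.le_div_iff_mul_le hd0, mul_comm]
        exact hprod'
      refine ⟨fun i => ⟨(hmem i.succ).1, ?_⟩, htail⟩
      calc Fin.tail f i ≤ ∏ j : Fin r, Fin.tail f j :=
            Finset.single_le_prod' (fun j _ => (hmem j.succ).1) (Finset.mem_univ i)
        _ ≤ N / d := htail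
    case hj =>
      intro g hg
      simp only [Finset.mem_filter, Fintype.mem_piFinset, Finset.mem_Icc] at hg ⊢
      obtain ⟨hmem, hprod⟩ := hg
      refine ⟨⟨?_, ?_⟩, rfl⟩
      · intro i
        refine Fin.cases ?_ ?_ i
        · simpa using hd
        · intro j
          simp only [Fin.cons_succ]
          exact ⟨(hmem j).1, le_trans (hmem j).2 (Nat.div_le_self N d)⟩
      · rw [Fin.prod_univ_succ]
        simp only [Fin.cons_zero, Fin.cons_succ]
        rw [mul_comm]
        exact (Nat.le_div_iff_mul_le hd0).mp hprod
    case left =>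
      intro f hf
      simp only [Finset.mem_filter] at hf
      have h0 : f 0 = d := hf.2
      funext i
      refine Fin.cases ?_ (fun j => ?_) i
      · simp [h0]
      · simp [Fin.tail]
    case right =>
      intro g _
      simp
  · intro f hf
    simp only [Finset.mem_coe, Finset.mem_filter, Fintype.mem_piFinset, Finset.mem_Icc] at hf
    simp only [Finset.mem_coe, Finset.mem_Icc]
    exact (hf.1 0)

lemma aux_pow (n : ℕ) (u v : ℝ) (hu : 0 ≤ u) (huv : u ≤ v) :
    u ^ (n + 1) + ((n : ℝ) + 1) * u ^ n * (v - u) ≤ v ^ (n + 1) := by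
  induction n with
  | zero => simpa using by nlinarith
  | succ n ih =>
    have hv : 0 ≤ v := le_trans hu huv
    have hn : (0 : ℝ) ≤ (n : ℝ) + 1 := by positivity
    have h4 : (0:ℝ) ≤ u ^ n * (v - u) := mul_nonneg (pow_nonneg hu n) (by linarith)
    have h1 : v * (u ^ (n + 1) + ((n : ℝ) + 1) * u ^ n * (v - u)) ≤ v ^ (n + 2) := by
      calc v * (u ^ (n + 1) + ((n : ℝ) + 1) * u ^ n * (v - u)) ≤ v * v ^ (n + 1) :=
            mul_le_mul_of_nonneg_left ih hv
        _ = v ^ (n + 2) := by ring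
    have h2 : u ^ (n + 2) + u ^ (n + 1) * (v - u) = u ^ (n + 1) * v := by ring
    have h3 : u ^ (n + 1) * (v - u) ≤ u ^ n * (v - u) * v := by
      calc u ^ (n + 1) * (v - u) = (u ^ n * (v - u)) * u := by ring
        _ ≤ (u ^ n * (v - u)) * v := mul_le_mul_of_nonneg_left huv h4
        _ = u ^ n * (v - u) * v := rfl
    have h5 := mul_le_mul_of_nonneg_left h3 hn
    push_cast
    nlinarith [h1, h2, h5]

lemma log_diff (d : ℕ) (hd : 2 ≤ d) :
    (1 : ℝ) / d ≤ Real.log d - Real.log (d - 1 : ℕ) := by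
  have h1 : (1:ℝ) ≤ (d:ℝ) - 1 := by
    have : (2:ℝ) ≤ d := by exact_mod_cast hd
    linarith
  have hd0 : (0:ℝ) < d := by linarith
  have hd1 : (0:ℝ) < (d:ℝ) - 1 := by linarith
  have hcast : ((d - 1 : ℕ) : ℝ) = (d:ℝ) - 1 := by
    have : 1 ≤ d := by omega
    push_cast [this]; ring
  rw [hcast]
  have hlog := Real.log_le_sub_one_of_pos (x := ((d:ℝ) - 1) / d) (by positivity)
  rw [Real.log_div (by linarith) (by linarith)] at hlog
  have : ((d:ℝ) - 1) / d - 1 = -(1/d) := by field_simp; ring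
  linarith [hlog, this.le, this.ge]

lemma key_sum (k N : ℕ) (hN : 1 ≤ N) :
    ∑ d ∈ Finset.Icc 1 N, (1 / (d:ℝ)) * ((k:ℝ) + Real.log N - Real.log d) ^ k
      ≤ ((k:ℝ) + 1 + Real.log N) ^ (k + 1) / ((k:ℝ) + 1) := by
  set L := Real.log N with hL
  have hL0 : 0 ≤ L := Real.log_natCast_nonneg N
  set F : ℕ → ℝ := fun d => ((k:ℝ) + L - Real.log d) ^ (k + 1) / ((k:ℝ) + 1) with hF
  have hk1 : (0:ℝ) < (k:ℝ) + 1 := by positivity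
  -- per-term bound
  have hterm : ∀ d ∈ Finset.Icc 2 N,
      (1 / (d:ℝ)) * ((k:ℝ) + L - Real.log d) ^ k ≤ F (d - 1) - F d := by
    intro d hd
    simp only [Finset.mem_Icc] at hd
    obtain ⟨hd2, hdN⟩ := hd
    set u := (k:ℝ) + L - Real.log d with hu
    set v := (k:ℝ) + L - Real.log (d - 1 : ℕ) with hv
    have hlogd : Real.log d ≤ L := by
      rw [hL]
      exact Real.log_le_log (by positivity) (by exact_mod_cast hdN)
    have hu0 : 0 ≤ u := by
      have : (0:ℝ) ≤ (k:ℝ) := Nat.cast_nonneg k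
      simp only [hu]; linarith
    have hdiff : (1:ℝ) / d ≤ v - u := by
      have := log_diff d hd2
      simp only [hu, hv]; linarith
    have hd0 : (0:ℝ) < (d:ℝ) := by exact_mod_cast (by omega : 0 < d)
    have hd0' : (0:ℝ) < 1 / (d:ℝ) := by positivity
    have huv : u ≤ v := by linarith
    have hpow := aux_pow k u v hu0 huv
    have hFd : F (d - 1) - F d = (v ^ (k+1) - u ^ (k+1)) / ((k:ℝ) + 1) := by
      simp only [hF, hu, hv]
      ring
    clear_value u v
    rw [hFd, le_div_iff₀ hk1]
    have h2 : (1 / (d:ℝ)) * u ^ k ≤ u ^ k * (v - u) := by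
      have := pow_nonneg hu0 k
      nlinarith [hdiff]
    have h3 := mul_le_mul_of_nonneg_right h2 hk1.le
    linarith [hpow, h3]
  have hsplit : Finset.Icc 1 N = insert 1 (Finset.Icc 2 N) := by
    ext x; simp only [Finset.mem_insert, Finset.mem_Icc]; omega
  have h1not : (1:ℕ) ∉ Finset.Icc 2 N := by simp
  rw [hsplit, Finset.sum_insert h1not]
  have hterm1 : (1 / ((1:ℕ):ℝ)) * ((k:ℝ) + L - Real.log (1:ℕ)) ^ k = ((k:ℝ) + L) ^ k := by
    simp
  have htele : ∑ d ∈ Finset.Icc 2 N, (F (d - 1) - F d) = F 1 - F N := by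
    rw [← Finset.Ico_add_one_right_eq_Icc, Finset.sum_Ico_eq_sum_range]
    have : ∀ i, F (2 + i - 1) - F (2 + i) = F (i + 1) - F ((i + 1) + 1) := by
      intro i
      congr 2 <;> omega
    rw [Finset.sum_congr rfl (fun i _ => this i)]
    rw [Finset.sum_range_sub' (fun i => F (i + 1))]
    have e2 : N + 1 - 2 + 1 = N := by omega
    simp only [e2]
  have hsum2 : ∑ d ∈ Finset.Icc 2 N, (1 / (d:ℝ)) * ((k:ℝ) + L - Real.log d) ^ k
      ≤ F 1 - F N := by
    rw [← htele]
    exact Finset.sum_le_sum hterm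
  have hFN : 0 ≤ F N := by
    have : (k:ℝ) + L - Real.log N = (k:ℝ) := by rw [hL]; ring
    simp only [hF, this]
    positivity
  have hF1 : F 1 = ((k:ℝ) + L) ^ (k + 1) / ((k:ℝ) + 1) := by
    simp [hF]
  have hfin := aux_pow k ((k:ℝ) + L) ((k:ℝ) + 1 + L) (by positivity) (by linarith)
  have hfin' : ((k:ℝ) + L) ^ k + ((k:ℝ) + L) ^ (k + 1) / ((k:ℝ) + 1)
      ≤ ((k:ℝ) + 1 + L) ^ (k + 1) / ((k:ℝ) + 1) := by
    rw [le_div_iff₀ hk1]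
    have hexp : (((k:ℝ)+L)^k + ((k:ℝ)+L)^(k+1)/((k:ℝ)+1)) * ((k:ℝ)+1)
        = ((k:ℝ)+L)^(k+1) + ((k:ℝ)+1)*((k:ℝ)+L)^k := by
      field_simp
      ring
    rw [hexp]
    nlinarith [hfin]
  calc (1 / ((1:ℕ):ℝ)) * ((k:ℝ) + L - Real.log (1:ℕ)) ^ k
        + ∑ d ∈ Finset.Icc 2 N, (1 / (d:ℝ)) * ((k:ℝ) + L - Real.log d) ^ k
      ≤ ((k:ℝ) + L) ^ k + (F 1 - F N) := by rw [hterm1]; linarith [hsum2]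
    _ ≤ ((k:ℝ) + L) ^ k + ((k:ℝ) + L) ^ (k + 1) / ((k:ℝ) + 1) := by
        rw [hF1]; linarith [hFN]
    _ ≤ ((k:ℝ) + 1 + L) ^ (k + 1) / ((k:ℝ) + 1) := hfin'

lemma T_one (N : ℕ) : T 1 N ≤ N := by
  unfold T
  calc _ ≤ (Fintype.piFinset (fun _ : Fin 1 => Finset.Icc 1 N)).card := Finset.card_filter_le _ _
    _ = N := by simp [Fintype.card_piFinset]

lemma T_bound (k : ℕ) : ∀ N : ℕ, 1 ≤ N →
    (T (k + 1) N : ℝ) ≤ (N : ℝ) * ((k : ℝ) + Real.log N) ^ k / (Nat.factorial k : ℝ) := by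
  induction k with
  | zero =>
    intro N hN
    simp only [Nat.cast_zero, zero_add, pow_zero, Nat.factorial_zero, Nat.cast_one, mul_one,
      div_one]
    exact_mod_cast T_one N
  | succ k ih =>
    intro N hN
    have hNpos : (0:ℝ) < N := by exact_mod_cast hN
    have hkfac : (0:ℝ) < (Nat.factorial k : ℝ) := by exact_mod_cast k.factorial_pos
    rw [T_succ]
    push_cast
    have hstep : ∀ d ∈ Finset.Icc 1 N, (T (k + 1) (N / d) : ℝ)
        ≤ (N : ℝ) / d * ((k:ℝ) + Real.log N - Real.log d) ^ k / (Nat.factorial k : ℝ) := by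
      intro d hd
      simp only [Finset.mem_Icc] at hd
      obtain ⟨hd1, hdN⟩ := hd
      have hdpos : (0:ℝ) < d := by exact_mod_cast hd1
      have hq1 : 1 ≤ N / d := (Nat.one_le_div_iff hd1).mpr hdN
      have hq1' : (1:ℝ) ≤ ((N / d : ℕ) : ℝ) := by exact_mod_cast hq1
      have hA : ((N / d : ℕ) : ℝ) ≤ (N : ℝ) / d := Nat.cast_div_le
      have hlogq : Real.log ((N / d : ℕ) : ℝ) ≤ Real.log N - Real.log d := by
        rw [← Real.log_div (by positivity) (by positivity)]
        exact Real.log_le_log (by linarith) hA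
      have hBase : (0:ℝ) ≤ (k:ℝ) + Real.log ((N / d : ℕ) : ℝ) := by
        have := Real.log_nonneg hq1'
        positivity
      have hB : ((k:ℝ) + Real.log ((N / d : ℕ) : ℝ)) ^ k
          ≤ ((k:ℝ) + Real.log N - Real.log d) ^ k := by
        apply pow_le_pow_left₀ hBase
        linarith
      calc (T (k + 1) (N / d) : ℝ)
          ≤ ((N / d : ℕ) : ℝ) * ((k:ℝ) + Real.log ((N / d : ℕ) : ℝ)) ^ k
              / (Nat.factorial k : ℝ) := ih (N / d) hq1
        _ ≤ (N : ℝ) / d * ((k:ℝ) + Real.log N - Real.log d) ^ k / (Nat.factorial k : ℝ) := by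
            exact (div_le_div_iff_of_pos_right hkfac).mpr
              (mul_le_mul hA hB (pow_nonneg hBase k) (by positivity))
    calc ∑ d ∈ Finset.Icc 1 N, (T (k + 1) (N / d) : ℝ)
        ≤ ∑ d ∈ Finset.Icc 1 N,
            (N : ℝ) / d * ((k:ℝ) + Real.log N - Real.log d) ^ k / (Nat.factorial k : ℝ) :=
          Finset.sum_le_sum hstep
      _ = (N : ℝ) / (Nat.factorial k : ℝ) *
            ∑ d ∈ Finset.Icc 1 N, (1 / (d:ℝ)) * ((k:ℝ) + Real.log N - Real.log d) ^ k := by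
          rw [Finset.mul_sum]
          apply Finset.sum_congr rfl
          intro d _
          ring
      _ ≤ (N : ℝ) / (Nat.factorial k : ℝ) *
            (((k:ℝ) + 1 + Real.log N) ^ (k + 1) / ((k:ℝ) + 1)) := by
          apply mul_le_mul_of_nonneg_left (key_sum k N hN) (by positivity)
      _ = (N : ℝ) * (((k:ℝ) + 1) + Real.log N) ^ (k + 1) / (Nat.factorial (k + 1) : ℝ) := by
          rw [Nat.factorial_succ]
          push_cast
          field_simp

theorem tau_sum_bound_of_small_r (c : ℝ) (hc : 0 < c) (r N : ℕ) (hr : 1 ≤ r) (hN : 1 ≤ N)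
    (hrN : (r : ℝ) - 1 ≤ c * Real.log N) :
    ∑ a ∈ Finset.Icc 1 N, (tau r a : ℝ)
      ≤ ((1 + c) ^ (r - 1) / (Nat.factorial (r - 1) : ℝ)) * (N : ℝ)
          * (Real.log N) ^ (r - 1) := by
  obtain ⟨k, rfl⟩ : ∃ k, r = k + 1 := ⟨r - 1, by omega⟩
  have hk : k + 1 - 1 = k := by omega
  rw [hk]
  have hL0 : (0:ℝ) ≤ Real.log N := Real.log_natCast_nonneg N
  have hkc : (k : ℝ) ≤ c * Real.log N := by push_cast at hrN; linarith
  have h1 : ∑ a ∈ Finset.Icc 1 N, (tau (k + 1) a : ℝ) = (T (k + 1) N : ℝ) := by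
    rw [← sum_tau'_eq_T]
    push_cast
    apply Finset.sum_congr rfl
    intro a ha
    simp only [Finset.mem_Icc] at ha
    rw [tau_eq_tau' (k + 1) a N ha.1 ha.2]
  rw [h1]
  have h2 := T_bound k N hN
  have h3 : ((k : ℝ) + Real.log N) ^ k ≤ ((1 + c) * Real.log N) ^ k := by
    apply pow_le_pow_left₀ (by linarith)
    nlinarith
  have hfac : (0:ℝ) < (Nat.factorial k : ℝ) := by exact_mod_cast k.factorial_pos
  have hNpos : (0:ℝ) ≤ (N:ℝ) := Nat.cast_nonneg N
  calc (T (k + 1) N : ℝ)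
      ≤ (N : ℝ) * ((k : ℝ) + Real.log N) ^ k / (Nat.factorial k : ℝ) := h2
    _ ≤ (N : ℝ) * ((1 + c) * Real.log N) ^ k / (Nat.factorial k : ℝ) := by
        apply (div_le_div_iff_of_pos_right hfac).mpr
        exact mul_le_mul_of_nonneg_left h3 hNpos
    _ = (1 + c) ^ k / (Nat.factorial k : ℝ) * (N : ℝ) * Real.log N ^ k := by
        rw [mul_pow]
        ring
end

section
/- For all integers r ≥ 1 and N ≥ 1, one has Σ_{a ≤ N^r} (τ'_r(a))² ≤ ( Σ_{a ≤ N} τ_r(a) )^r, where in the left-hand sum a runs over positive integers ≤ N^r and in the right-hand sum over positive integers ≤ N. -/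
open Finset

lemma gcd_key {a A b B : ℕ} (ha : a ≠ 0) (hb : b ≠ 0) (hA : A ≠ 0) (hB : B ≠ 0)
    (haA : a ∣ A) (hbB : b ∣ B) :
    Nat.gcd A b * Nat.gcd a B ∣ Nat.gcd A B * Nat.gcd a b := by
  rw [← Nat.factorization_le_iff_dvd (Nat.mul_ne_zero (Nat.gcd_ne_zero_left hA) (Nat.gcd_ne_zero_left ha)) (Nat.mul_ne_zero (Nat.gcd_ne_zero_left hA) (Nat.gcd_ne_zero_left ha))]
  have hA' := (Nat.factorization_le_iff_dvd ha hA).mpr haA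
  have hB' := (Nat.factorization_le_iff_dvd hb hB).mpr hbB
  intro p
  have h1 := hA' p
  have h2 := hB' p
  rw [Nat.factorization_mul (Nat.gcd_ne_zero_left hA) (Nat.gcd_ne_zero_left ha),
    Nat.factorization_mul (Nat.gcd_ne_zero_left hA) (Nat.gcd_ne_zero_left ha),
    Nat.factorization_gcd hA hb, Nat.factorization_gcd ha hB,
    Nat.factorization_gcd hA hB, Nat.factorization_gcd ha hb]
  simp only [Finsupp.coe_add, Pi.add_apply, Finsupp.inf_apply]
  omega

/-- partial products -/
def pp (f : ℕ → ℕ) (k : ℕ) : ℕ := ∏ i ∈ Finset.range k, f i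

def mat (f g : ℕ → ℕ) (i j : ℕ) : ℕ :=
  (Nat.gcd (pp f (i+1)) (pp g (j+1)) * Nat.gcd (pp f i) (pp g j)) /
    (Nat.gcd (pp f (i+1)) (pp g j) * Nat.gcd (pp f i) (pp g (j+1)))

variable {f g : ℕ → ℕ}

lemma pp_pos (hf : ∀ i, 1 ≤ f i) (k : ℕ) : 0 < pp f k :=
  Finset.prod_pos fun i _ => hf i

lemma pp_dvd (f : ℕ → ℕ) {i j : ℕ} (h : i ≤ j) : pp f i ∣ pp f j := by
  unfold pp
  exact Finset.prod_dvd_prod_of_subset _ _ _ (Finset.range_subset_range.mpr h)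

lemma mat_dvd (hf : ∀ i, 1 ≤ f i) (hg : ∀ i, 1 ≤ g i) (i j : ℕ) :
    Nat.gcd (pp f (i+1)) (pp g j) * Nat.gcd (pp f i) (pp g (j+1)) ∣
      Nat.gcd (pp f (i+1)) (pp g (j+1)) * Nat.gcd (pp f i) (pp g j) := by
  have := gcd_key (a := pp f i) (A := pp f (i+1)) (b := pp g j) (B := pp g (j+1))
    (pp_pos hf i).ne' (pp_pos hg j).ne' (pp_pos hf (i+1)).ne' (pp_pos hg (j+1)).ne'
    (pp_dvd f (Nat.le_succ i)) (pp_dvd g (Nat.le_succ j))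
  calc Nat.gcd (pp f (i+1)) (pp g j) * Nat.gcd (pp f i) (pp g (j+1)) ∣
      Nat.gcd (pp f (i+1)) (pp g (j+1)) * Nat.gcd (pp f i) (pp g j) := this
  
lemma mat_spec (hf : ∀ i, 1 ≤ f i) (hg : ∀ i, 1 ≤ g i) (i j : ℕ) :
    mat f g i j * (Nat.gcd (pp f (i+1)) (pp g j) * Nat.gcd (pp f i) (pp g (j+1))) =
      Nat.gcd (pp f (i+1)) (pp g (j+1)) * Nat.gcd (pp f i) (pp g j) :=
  Nat.div_mul_cancel (mat_dvd hf hg i j)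

lemma mat_pos (hf : ∀ i, 1 ≤ f i) (hg : ∀ i, 1 ≤ g i) (i j : ℕ) : 0 < mat f g i j := by
  unfold mat
  have hden : 0 < Nat.gcd (pp f (i+1)) (pp g j) * Nat.gcd (pp f i) (pp g (j+1)) :=
    Nat.mul_pos (Nat.gcd_pos_of_pos_left _ (pp_pos hf (i+1)))
      (Nat.gcd_pos_of_pos_left _ (pp_pos hf i))
  have hnum : 0 < Nat.gcd (pp f (i+1)) (pp g (j+1)) * Nat.gcd (pp f i) (pp g j) :=
    Nat.mul_pos (Nat.gcd_pos_of_pos_left _ (pp_pos hf (i+1)))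
      (Nat.gcd_pos_of_pos_left _ (pp_pos hf i))
  exact Nat.div_pos (Nat.le_of_dvd hnum (mat_dvd hf hg i j)) hden

lemma mat_symm (f g : ℕ → ℕ) (i j : ℕ) : mat f g i j = mat g f j i := by
  unfold mat
  rw [Nat.gcd_comm (pp f (i+1)) (pp g (j+1)), Nat.gcd_comm (pp f i) (pp g j),
    Nat.gcd_comm (pp f (i+1)) (pp g j), Nat.gcd_comm (pp f i) (pp g (j+1))]
  ring_nf

lemma mat_row_aux (hf : ∀ i, 1 ≤ f i) (hg : ∀ i, 1 ≤ g i) (i : ℕ) : ∀ k,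
    (∏ j ∈ Finset.range k, mat f g i j) * Nat.gcd (pp f i) (pp g k) =
      Nat.gcd (pp f (i+1)) (pp g k) := by
  intro k
  induction k with
  | zero => simp [pp]
  | succ k ih =>
    have hc : 0 < Nat.gcd (pp f (i+1)) (pp g k) :=
      Nat.gcd_pos_of_pos_left _ (pp_pos hf (i+1))
    apply Nat.eq_of_mul_eq_mul_right hc
    calc (∏ j ∈ Finset.range (k+1), mat f g i j) * Nat.gcd (pp f i) (pp g (k+1)) *
          Nat.gcd (pp f (i+1)) (pp g k)
        = (∏ j ∈ Finset.range k, mat f g i j) *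
            (mat f g i k * (Nat.gcd (pp f (i+1)) (pp g k) * Nat.gcd (pp f i) (pp g (k+1)))) := by
          rw [Finset.prod_range_succ]; ring
      _ = (∏ j ∈ Finset.range k, mat f g i j) *
            (Nat.gcd (pp f (i+1)) (pp g (k+1)) * Nat.gcd (pp f i) (pp g k)) := by
          rw [mat_spec hf hg]
      _ = ((∏ j ∈ Finset.range k, mat f g i j) * Nat.gcd (pp f i) (pp g k)) *
            Nat.gcd (pp f (i+1)) (pp g (k+1)) := by ring
      _ = Nat.gcd (pp f (i+1)) (pp g k) * Nat.gcd (pp f (i+1)) (pp g (k+1)) := by rw [ih]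
      _ = Nat.gcd (pp f (i+1)) (pp g (k+1)) * Nat.gcd (pp f (i+1)) (pp g k) := by ring

lemma mat_row (hf : ∀ i, 1 ≤ f i) (hg : ∀ i, 1 ≤ g i) {r : ℕ}
    (h : pp f r = pp g r) {i : ℕ} (hi : i < r) :
    ∏ j ∈ Finset.range r, mat f g i j = f i := by
  have h1 := mat_row_aux hf hg i r
  rw [← h] at h1
  rw [Nat.gcd_eq_left (pp_dvd f hi.le), Nat.gcd_eq_left (pp_dvd f hi)] at h1
  have h2 : pp f (i+1) = pp f i * f i := Finset.prod_range_succ f i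
  rw [h2] at h1
  have := (pp_pos hf i).ne'
  exact Nat.eq_of_mul_eq_mul_left (pp_pos hf i) (by linarith [h1] ; )

def extend {r : ℕ} (f : Fin r → ℕ) (n : ℕ) : ℕ := if h : n < r then f ⟨n, h⟩ else 1

lemma extend_pos {r : ℕ} {f : Fin r → ℕ} (hf : ∀ i, 1 ≤ f i) (n : ℕ) : 1 ≤ extend f n := by
  unfold extend; split
  · exact hf _
  · exact le_refl 1

lemma extend_apply {r : ℕ} (f : Fin r → ℕ) (i : Fin r) : extend f ↑i = f i := by
  unfold extend; rw [dif_pos i.isLt]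

lemma pp_extend {r : ℕ} (f : Fin r → ℕ) : pp (extend f) r = ∏ i, f i := by
  unfold pp
  rw [← Fin.prod_univ_eq_prod_range]
  exact Finset.prod_congr rfl fun i _ => extend_apply f i

def matF {r : ℕ} (f g : Fin r → ℕ) (i j : Fin r) : ℕ := mat (extend f) (extend g) ↑i ↑j

lemma matF_pos {r : ℕ} {f g : Fin r → ℕ} (hf : ∀ i, 1 ≤ f i) (hg : ∀ i, 1 ≤ g i)
    (i j : Fin r) : 1 ≤ matF f g i j :=
  mat_pos (extend_pos hf) (extend_pos hg) ↑i ↑j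

lemma matF_row {r : ℕ} {f g : Fin r → ℕ} (hf : ∀ i, 1 ≤ f i) (hg : ∀ i, 1 ≤ g i)
    (h : ∏ i, f i = ∏ i, g i) (i : Fin r) : ∏ j, matF f g i j = f i := by
  have hpp : pp (extend f) r = pp (extend g) r := by rw [pp_extend, pp_extend, h]
  have := mat_row (extend_pos hf) (extend_pos hg) hpp i.isLt
  rw [← extend_apply f i, ← this, ← Fin.prod_univ_eq_prod_range]
  rfl

lemma matF_col {r : ℕ} {f g : Fin r → ℕ} (hf : ∀ i, 1 ≤ f i) (hg : ∀ i, 1 ≤ g i)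
    (h : ∏ i, f i = ∏ i, g i) (j : Fin r) : ∏ i, matF f g i j = g j := by
  have hpp : pp (extend g) r = pp (extend f) r := by rw [pp_extend, pp_extend, h]
  have := mat_row (extend_pos hg) (extend_pos hf) hpp j.isLt
  rw [← extend_apply g j, ← this, ← Fin.prod_univ_eq_prod_range]
  exact Finset.prod_congr rfl fun i _ => mat_symm _ _ _ _


-- tau r a as a filter over the large box, for 1 ≤ a ≤ N
lemma tau_eq (r N a : ℕ) (ha : 1 ≤ a) (haN : a ≤ N) :
    tau r a = ((Fintype.piFinset (fun _ : Fin r => Finset.Icc 1 N)).filter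
      (fun f => ∏ i, f i = a)).card := by
  unfold tau
  congr 1
  ext f
  simp only [Finset.mem_filter, Fintype.mem_piFinset, Finset.mem_Icc]
  constructor
  · rintro ⟨h1, h2⟩
    exact ⟨fun i => ⟨(h1 i).1, le_trans (h1 i).2 haN⟩, h2⟩
  · rintro ⟨h1, h2⟩
    refine ⟨fun i => ⟨(h1 i).1, ?_⟩, h2⟩
    rw [← h2]
    exact Finset.single_le_prod' (fun j _ => (h1 j).1) (Finset.mem_univ i)

lemma sum_tau (r N : ℕ) :
    ∑ a ∈ Finset.Icc 1 N, tau r a =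
      ((Fintype.piFinset (fun _ : Fin r => Finset.Icc 1 N)).filter
        (fun f => ∏ i, f i ≤ N)).card := by
  rw [Finset.card_eq_sum_card_fiberwise (f := fun f => ∏ i, f i) (t := Finset.Icc 1 N)]
  · apply Finset.sum_congr rfl
    intro a ha
    rw [Finset.mem_Icc] at ha
    rw [tau_eq r N a ha.1 ha.2]
    congr 1
    rw [Finset.filter_filter]
    apply Finset.filter_congr
    intro f _
    constructor
    · exact fun h => ⟨h ▸ ha.2, h⟩
    · exact fun h => h.2
  · intro f hf
    rw [Finset.mem_coe, Finset.mem_filter] at hf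
    rw [Finset.mem_coe, Finset.mem_Icc]
    refine ⟨?_, hf.2⟩
    apply Finset.one_le_prod'
    intro i _
    exact (Finset.mem_Icc.mp (Fintype.mem_piFinset.mp hf.1 i)).1

lemma sum_tau'_sq (r N : ℕ) :
    ∑ a ∈ Finset.Icc 1 (N ^ r), tau' r N a ^ 2 =
      (((Fintype.piFinset (fun _ : Fin r => Finset.Icc 1 N)) ×ˢ
        (Fintype.piFinset (fun _ : Fin r => Finset.Icc 1 N))).filter
          (fun p => ∏ i, p.1 i = ∏ i, p.2 i)).card := by
  rw [Finset.card_eq_sum_card_fiberwise (f := fun p => ∏ i, p.1 i)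
    (t := Finset.Icc 1 (N ^ r))]
  · apply Finset.sum_congr rfl
    intro a _
    rw [Finset.filter_filter]
    have : ((Fintype.piFinset (fun _ : Fin r => Finset.Icc 1 N)) ×ˢ
        (Fintype.piFinset (fun _ : Fin r => Finset.Icc 1 N))).filter
          (fun p => (∏ i, p.1 i = ∏ i, p.2 i) ∧ ∏ i, p.1 i = a) =
        ((Fintype.piFinset (fun _ : Fin r => Finset.Icc 1 N)) ×ˢ
        (Fintype.piFinset (fun _ : Fin r => Finset.Icc 1 N))).filter
          (fun p => (∏ i, p.1 i = a) ∧ ∏ i, p.2 i = a) := by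
      apply Finset.filter_congr
      intro p _
      constructor
      · rintro ⟨h1, h2⟩; exact ⟨h2, by rw [← h1]; exact h2⟩
      · rintro ⟨h1, h2⟩; exact ⟨h1.trans h2.symm, h1⟩
    rw [this]
    have h3 : ((Fintype.piFinset (fun _ : Fin r => Finset.Icc 1 N)) ×ˢ
        (Fintype.piFinset (fun _ : Fin r => Finset.Icc 1 N))).filter
          (fun p => (∏ i, p.1 i = a) ∧ ∏ i, p.2 i = a) =
        ((Fintype.piFinset (fun _ : Fin r => Finset.Icc 1 N)).filter (fun f => ∏ i, f i = a)) ×ˢ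
        ((Fintype.piFinset (fun _ : Fin r => Finset.Icc 1 N)).filter (fun f => ∏ i, f i = a)) := by
      ext p
      simp only [Finset.mem_filter, Finset.mem_product]
      tauto
    rw [h3, Finset.card_product]
    unfold tau'
    ring
  · intro p hp
    rw [Finset.mem_coe, Finset.mem_filter] at hp
    have h1 := (Finset.mem_product.mp hp.1).1
    rw [Finset.mem_coe, Finset.mem_Icc]
    constructor
    · apply Finset.one_le_prod'
      intro i _
      exact (Finset.mem_Icc.mp (Fintype.mem_piFinset.mp h1 i)).1
    · calc ∏ i, p.1 i ≤ ∏ _i : Fin r, N :=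
            Finset.prod_le_prod' fun i _ =>
              (Finset.mem_Icc.mp (Fintype.mem_piFinset.mp h1 i)).2
        _ = N ^ r := by rw [Finset.prod_const, Finset.card_univ, Fintype.card_fin]

theorem tau'_sq_sum_le (r N : ℕ) (hr : 1 ≤ r) (hN : 1 ≤ N) :
    ∑ a ∈ Finset.Icc 1 (N ^ r), (tau' r N a) ^ 2 ≤ (∑ a ∈ Finset.Icc 1 N, tau r a) ^ r := by
  rw [sum_tau'_sq, sum_tau]
  set S := Fintype.piFinset (fun _ : Fin r => Finset.Icc 1 N) with hS
  set T := S.filter (fun f => ∏ i, f i ≤ N) with hT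
  have hcard : T.card ^ r = (Fintype.piFinset (fun _ : Fin r => T)).card := by
    rw [Fintype.card_piFinset, Finset.prod_const, Finset.card_univ, Fintype.card_fin]
  rw [hcard]
  apply Finset.card_le_card_of_injOn (fun p => matF p.1 p.2)
  · intro p hp
    rw [Finset.mem_coe, Finset.mem_filter] at hp
    obtain ⟨hmem, hprod⟩ := hp
    rw [Finset.mem_product] at hmem
    have h1 : ∀ i, 1 ≤ p.1 i ∧ p.1 i ≤ N := fun i =>
      Finset.mem_Icc.mp (Fintype.mem_piFinset.mp hmem.1 i)
    have h2 : ∀ i, 1 ≤ p.2 i ∧ p.2 i ≤ N := fun i =>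
      Finset.mem_Icc.mp (Fintype.mem_piFinset.mp hmem.2 i)
    have hf : ∀ i, 1 ≤ p.1 i := fun i => (h1 i).1
    have hg : ∀ i, 1 ≤ p.2 i := fun i => (h2 i).1
    rw [Finset.mem_coe, Fintype.mem_piFinset]
    intro i
    have hrow : ∏ j, matF p.1 p.2 i j = p.1 i := matF_row hf hg hprod i
    rw [hT, Finset.mem_filter]
    constructor
    · rw [hS, Fintype.mem_piFinset]
      intro j
      rw [Finset.mem_Icc]
      refine ⟨matF_pos hf hg i j, ?_⟩
      calc matF p.1 p.2 i j ≤ ∏ j', matF p.1 p.2 i j' :=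
            Finset.single_le_prod' (fun j' _ => matF_pos hf hg i j') (Finset.mem_univ j)
        _ = p.1 i := hrow
        _ ≤ N := (h1 i).2
    · rw [hrow]; exact (h1 i).2
  · intro p hp q hq heq
    rw [Finset.mem_coe, Finset.mem_filter] at hp hq
    obtain ⟨hmemp, hprodp⟩ := hp
    obtain ⟨hmemq, hprodq⟩ := hq
    rw [Finset.mem_product] at hmemp hmemq
    have hfp : ∀ i, 1 ≤ p.1 i := fun i =>
      (Finset.mem_Icc.mp (Fintype.mem_piFinset.mp hmemp.1 i)).1
    have hgp : ∀ i, 1 ≤ p.2 i := fun i =>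
      (Finset.mem_Icc.mp (Fintype.mem_piFinset.mp hmemp.2 i)).1
    have hfq : ∀ i, 1 ≤ q.1 i := fun i =>
      (Finset.mem_Icc.mp (Fintype.mem_piFinset.mp hmemq.1 i)).1
    have hgq : ∀ i, 1 ≤ q.2 i := fun i =>
      (Finset.mem_Icc.mp (Fintype.mem_piFinset.mp hmemq.2 i)).1
    have heq' : matF p.1 p.2 = matF q.1 q.2 := heq
    apply Prod.ext
    · funext i
      calc p.1 i = ∏ j, matF p.1 p.2 i j := (matF_row hfp hgp hprodp i).symm
        _ = ∏ j, matF q.1 q.2 i j := by rw [heq']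
        _ = q.1 i := matF_row hfq hgq hprodq i
    · funext j
      calc p.2 j = ∏ i, matF p.1 p.2 i j := (matF_col hfp hgp hprodp j).symm
        _ = ∏ i, matF q.1 q.2 i j := by rw [heq']
        _ = q.2 j := matF_col hfq hgq hprodq j
end

section
/- Let c > 0 be a real number. For all integers r ≥ 1 and N ≥ 1 satisfying r − 1 ≤ c·log N, one has Σ_{a ≤ N^r} (τ'_r(a))² ≤ ( ((1+c)^{r−1}/(r−1)!) · N · (log N)^{r−1} )^r, where a runs over positive integers ≤ N^r. -/
open Finset

lemma mem_factor_iff {r a M : ℕ} (ha : 1 ≤ a) (haM : a ≤ M) (f : Fin r → ℕ) :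
    (f ∈ (Fintype.piFinset (fun _ : Fin r => Finset.Icc 1 M)).filter (fun f => ∏ i, f i = a)) ↔
      ∏ i, f i = a := by
  simp only [Finset.mem_filter, Fintype.mem_piFinset, Finset.mem_Icc]
  constructor
  · rintro ⟨-, h⟩; exact h
  · intro h
    refine ⟨fun i => ?_, h⟩
    have hdvd : f i ∣ a := h ▸ Finset.dvd_prod_of_mem f (Finset.mem_univ i)
    exact ⟨Nat.pos_of_dvd_of_pos hdvd ha, le_trans (Nat.le_of_dvd ha hdvd) haM⟩

lemma tau_eq_card {r a M : ℕ} (ha : 1 ≤ a) (haM : a ≤ M) :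
    tau r a = ((Fintype.piFinset (fun _ : Fin r => Finset.Icc 1 M)).filter
      (fun f => ∏ i, f i = a)).card := by
  unfold tau
  congr 1
  ext f
  rw [mem_factor_iff ha le_rfl, mem_factor_iff ha haM]

lemma tau'_le_tau {r N a : ℕ} (ha : 1 ≤ a) : tau' r N a ≤ tau r a := by
  rw [tau_eq_card (M := max a N) ha (le_max_left _ _)]
  apply Finset.card_le_card
  intro f hf
  rw [mem_factor_iff ha (le_max_left _ _)]
  exact (Finset.mem_filter.mp hf).2

lemma tau_one (r : ℕ) : tau r 1 = 1 := by
  unfold tau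
  rw [Finset.card_eq_one]
  refine ⟨fun _ => 1, ?_⟩
  ext f
  simp only [Finset.mem_filter, Fintype.mem_piFinset, Finset.mem_Icc, Finset.mem_singleton]
  constructor
  · rintro ⟨h1, h2⟩
    funext i
    exact le_antisymm (h1 i).2 (h1 i).1
  · rintro rfl
    simp

lemma tau_one_eq {a : ℕ} (ha : 1 ≤ a) : tau 1 a = 1 := by
  unfold tau
  rw [Finset.card_eq_one]
  refine ⟨fun _ => a, ?_⟩
  ext f
  simp only [Finset.mem_filter, Fintype.mem_piFinset, Finset.mem_Icc, Finset.mem_singleton,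
    Fin.prod_univ_one]
  constructor
  · rintro ⟨-, rfl⟩; funext i; exact Fin.cases rfl (fun i => i.elim0) i
  · rintro rfl; exact ⟨fun i => ⟨ha, le_rfl⟩, rfl⟩

lemma tau_succ {r a : ℕ} (ha : 1 ≤ a) :
    tau (r + 1) a = ∑ d ∈ a.divisors, tau r (a / d) := by
  unfold tau
  rw [Finset.card_eq_sum_card_fiberwise (f := fun f => f 0) (t := a.divisors)]
  · apply Finset.sum_congr rfl
    intro d hd
    obtain ⟨hdvd, -⟩ := Nat.mem_divisors.mp hd
    have hd1 : 1 ≤ d := Nat.pos_of_dvd_of_pos hdvd ha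
    have had : 1 ≤ a / d := Nat.div_pos (Nat.le_of_dvd ha hdvd) hd1
    apply Finset.card_nbij' (fun f => Fin.tail f) (fun g => Fin.cons d g)
    · intro f hf
      obtain ⟨hmem', hf0⟩ := Finset.mem_filter.mp hf
      have hprod := (mem_factor_iff ha le_rfl f).mp hmem'
      rw [Finset.mem_coe, mem_factor_iff had le_rfl]
      rw [Fin.prod_univ_succ, hf0] at hprod
      have h2 : a = (∏ i : Fin r, Fin.tail f i) * d := by
        rw [mul_comm]; exact hprod.symm
      exact (Nat.div_eq_of_eq_mul_left hd1 h2).symm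
    · intro g hg
      rw [Finset.mem_coe, mem_factor_iff had le_rfl] at hg
      rw [Finset.mem_coe, Finset.mem_filter]
      refine ⟨(mem_factor_iff ha le_rfl _).mpr ?_, rfl⟩
      rw [Fin.prod_univ_succ]
      simp only [Fin.cons_zero, Fin.cons_succ]
      rw [hg, Nat.mul_div_cancel' hdvd]
    · intro f hf
      obtain ⟨-, hf0⟩ := Finset.mem_filter.mp hf
      rw [← hf0]
      exact Fin.cons_self_tail f
    · intro g _
      exact Fin.tail_cons (α := fun _ => ℕ) d g
  · intro f hf
    rw [Finset.mem_coe, mem_factor_iff ha le_rfl] at hf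
    exact Nat.mem_divisors.mpr ⟨hf ▸ Finset.dvd_prod_of_mem f (Finset.mem_univ 0),
      Nat.one_le_iff_ne_zero.mp ha⟩

lemma tau_zero_ne {a : ℕ} (h : a ≠ 1) : tau 0 a = 0 := by
  unfold tau
  rw [Finset.card_eq_zero, Finset.filter_eq_empty_iff]
  intro f _
  simp only [Finset.univ_eq_empty, Finset.prod_empty]
  exact fun hh => h hh.symm

lemma div_gcd_dvd_right {d m n : ℕ} (hm : 0 < m) (h : d ∣ m * n) :
    d / Nat.gcd d m ∣ n := by
  set g := Nat.gcd d m with hgdef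
  have hg : 0 < g := Nat.gcd_pos_of_pos_right d hm
  have hgd : g ∣ d := Nat.gcd_dvd_left d m
  have hgm : g ∣ m := Nat.gcd_dvd_right d m
  have hco : Nat.Coprime (d / g) (m / g) := Nat.coprime_div_gcd_div_gcd hg
  apply hco.dvd_of_dvd_mul_left
  obtain ⟨k, hk⟩ := h
  refine ⟨k, ?_⟩
  apply Nat.eq_of_mul_eq_mul_left hg
  calc g * (m / g * n) = (g * (m / g)) * n := by ring
    _ = m * n := by rw [Nat.mul_div_cancel' hgm]
    _ = g * (d / g * k) := by
        rw [hk, ← Nat.mul_assoc, Nat.mul_div_cancel' hgd]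

lemma tau_submul (r : ℕ) : ∀ {m n : ℕ}, 1 ≤ m → 1 ≤ n → tau r (m * n) ≤ tau r m * tau r n := by
  induction r with
  | zero =>
    intro m n hm hn
    by_cases h : m * n = 1
    · have h1 : m = 1 := by
        have := Nat.eq_one_of_mul_eq_one_right h
        omega
      have h2 : n = 1 := Nat.eq_one_of_mul_eq_one_left h
      subst h1; subst h2; simp [tau_one]
    · rw [tau_zero_ne h]; exact Nat.zero_le _
  | succ r ih =>
    intro m n hm hn
    have hmn : 1 ≤ m * n := Nat.one_le_iff_ne_zero.mpr (Nat.mul_ne_zero (by omega) (by omega))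
    rw [tau_succ hmn, tau_succ hm, tau_succ hn, Finset.sum_mul_sum, ← Finset.sum_product']
    set e : ℕ → ℕ × ℕ := fun d => (Nat.gcd d m, d / Nat.gcd d m) with he
    have key : ∀ d ∈ (m * n).divisors,
        (e d).1 ∣ m ∧ (e d).2 ∣ n ∧ (e d).1 * (e d).2 = d := by
      intro d hd
      obtain ⟨hdvd, -⟩ := Nat.mem_divisors.mp hd
      exact ⟨Nat.gcd_dvd_right d m, div_gcd_dvd_right (by omega) hdvd,
        Nat.mul_div_cancel' (Nat.gcd_dvd_left d m)⟩
    calc ∑ d ∈ (m * n).divisors, tau r (m * n / d)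
        ≤ ∑ d ∈ (m * n).divisors, tau r (m / (e d).1) * tau r (n / (e d).2) := by
          apply Finset.sum_le_sum
          intro d hd
          obtain ⟨h1, h2, h3⟩ := key d hd
          have hd1 : 0 < (e d).1 := Nat.pos_of_dvd_of_pos h1 (by omega)
          have hd2 : 0 < (e d).2 := Nat.pos_of_dvd_of_pos h2 (by omega)
          have : m * n / d = (m / (e d).1) * (n / (e d).2) := by
            rw [Nat.div_mul_div_comm h1 h2, h3]
          rw [this]
          exact ih (Nat.div_pos (Nat.le_of_dvd (by omega) h1) hd1)
            (Nat.div_pos (Nat.le_of_dvd (by omega) h2) hd2)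
      _ = ∑ p ∈ (m * n).divisors.image e, tau r (m / p.1) * tau r (n / p.2) := by
          rw [Finset.sum_image]
          intro x hx y hy hxy
          obtain ⟨-, -, h3x⟩ := key x hx
          obtain ⟨-, -, h3y⟩ := key y hy
          rw [← h3x, ← h3y, hxy]
      _ ≤ ∑ p ∈ m.divisors ×ˢ n.divisors, tau r (m / p.1) * tau r (n / p.2) := by
          apply Finset.sum_le_sum_of_subset
          intro p hp
          obtain ⟨d, hd, rfl⟩ := Finset.mem_image.mp hp
          obtain ⟨h1, h2, -⟩ := key d hd
          exact Finset.mem_product.mpr ⟨Nat.mem_divisors.mpr ⟨h1, by omega⟩,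
            Nat.mem_divisors.mpr ⟨h2, by omega⟩⟩

lemma tau_prod_le {r : ℕ} {ι : Type*} (s : Finset ι) (f : ι → ℕ) (hf : ∀ i ∈ s, 1 ≤ f i) :
    tau r (∏ i ∈ s, f i) ≤ ∏ i ∈ s, tau r (f i) := by
  induction s using Finset.cons_induction with
  | empty => simp [tau_one]
  | cons a s ha ih =>
    rw [Finset.prod_cons, Finset.prod_cons]
    calc tau r (f a * ∏ i ∈ s, f i)
        ≤ tau r (f a) * tau r (∏ i ∈ s, f i) :=
          tau_submul r (hf a (Finset.mem_cons_self a s))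
            (Finset.one_le_prod' fun i hi => hf i (Finset.mem_cons_of_mem hi))
      _ ≤ tau r (f a) * ∏ i ∈ s, tau r (f i) :=
          Nat.mul_le_mul_left _ (ih fun i hi => hf i (Finset.mem_cons_of_mem hi))

lemma sum_tau'_sq_le (r N : ℕ) (hN : 1 ≤ N) :
    ∑ a ∈ Finset.Icc 1 (N ^ r), (tau' r N a) ^ 2 ≤ (∑ n ∈ Finset.Icc 1 N, tau r n) ^ r := by
  have hmaps : ∀ b ∈ Fintype.piFinset (fun _ : Fin r => Finset.Icc 1 N),
      (∏ i, b i) ∈ Finset.Icc 1 (N ^ r) := by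
    intro b hb
    rw [Fintype.mem_piFinset] at hb
    simp only [Finset.mem_Icc] at hb ⊢
    constructor
    · exact Finset.one_le_prod' fun i _ => (hb i).1
    · calc ∏ i, b i ≤ ∏ _i : Fin r, N := Finset.prod_le_prod' fun i _ => (hb i).2
        _ = N ^ r := by rw [Finset.prod_const, Finset.card_univ, Fintype.card_fin]
  have h1 : ∑ a ∈ Finset.Icc 1 (N ^ r), (tau' r N a) ^ 2
      = ∑ b ∈ Fintype.piFinset (fun _ : Fin r => Finset.Icc 1 N), tau' r N (∏ i, b i) := by
    rw [← Finset.sum_fiberwise_of_maps_to hmaps (fun b => tau' r N (∏ i, b i))]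
    apply Finset.sum_congr rfl
    intro a _
    symm
    calc ∑ b ∈ (Fintype.piFinset (fun _ : Fin r => Finset.Icc 1 N)).filter
          (fun b => ∏ i, b i = a), tau' r N (∏ i, b i)
        = ∑ b ∈ (Fintype.piFinset (fun _ : Fin r => Finset.Icc 1 N)).filter
          (fun b => ∏ i, b i = a), tau' r N a := by
          apply Finset.sum_congr rfl
          intro b hb
          rw [(Finset.mem_filter.mp hb).2]
      _ = (tau' r N a) ^ 2 := by
          rw [Finset.sum_const, Finset.card_filter]
          unfold tau'
          rw [Finset.card_filter]
          rw [smul_eq_mul, sq]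
  rw [h1]
  calc ∑ b ∈ Fintype.piFinset (fun _ : Fin r => Finset.Icc 1 N), tau' r N (∏ i, b i)
      ≤ ∑ b ∈ Fintype.piFinset (fun _ : Fin r => Finset.Icc 1 N), ∏ i, tau r (b i) := by
        apply Finset.sum_le_sum
        intro b hb
        rw [Fintype.mem_piFinset] at hb
        have h2 : 1 ≤ ∏ i, b i := Finset.one_le_prod' fun i _ =>
          (Finset.mem_Icc.mp (hb i)).1
        exact le_trans (tau'_le_tau h2)
          (tau_prod_le Finset.univ b fun i _ => (Finset.mem_Icc.mp (hb i)).1)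
    _ = (∑ n ∈ Finset.Icc 1 N, tau r n) ^ r := by
        rw [← Finset.prod_univ_sum]
        rw [Finset.prod_const, Finset.card_univ, Fintype.card_fin]

lemma swap_sum (k N : ℕ) :
    ∑ n ∈ Finset.Icc 1 N, tau (k + 2) n
      = ∑ d ∈ Finset.Icc 1 N, ∑ m ∈ Finset.Icc 1 (N / d), tau (k + 1) m := by
  have h1 : ∀ n ∈ Finset.Icc 1 N, tau (k + 2) n = ∑ d ∈ n.divisors, tau (k + 1) (n / d) :=
    fun n hn => tau_succ (Finset.mem_Icc.mp hn).1
  rw [Finset.sum_congr rfl h1, Finset.sum_sigma', Finset.sum_sigma']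
  apply Finset.sum_nbij' (i := fun p => (⟨p.2, p.1 / p.2⟩ : Σ _ : ℕ, ℕ))
    (j := fun p => (⟨p.1 * p.2, p.1⟩ : Σ _ : ℕ, ℕ))
  · rintro ⟨n, d⟩ hp
    simp only [Finset.mem_sigma, Finset.mem_Icc, Nat.mem_divisors] at hp ⊢
    obtain ⟨⟨hn1, hn2⟩, hdvd, hn0⟩ := hp
    have hd1 : 1 ≤ d := Nat.pos_of_dvd_of_pos hdvd (by omega)
    refine ⟨⟨hd1, le_trans (Nat.le_of_dvd (by omega) hdvd) hn2⟩,
      ⟨Nat.div_pos (Nat.le_of_dvd (by omega) hdvd) hd1, Nat.div_le_div_right hn2⟩⟩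
  · rintro ⟨d, m⟩ hp
    simp only [Finset.mem_sigma, Finset.mem_Icc, Nat.mem_divisors] at hp ⊢
    obtain ⟨⟨hd1, hdN⟩, hm1, hmN⟩ := hp
    have hdm : d * m ≤ N := by
      rw [mul_comm]
      exact (Nat.le_div_iff_mul_le (by omega)).mp hmN
    exact ⟨⟨Nat.mul_pos hd1 hm1, hdm⟩, Dvd.intro m rfl, (Nat.mul_pos hd1 hm1).ne'⟩
  · rintro ⟨n, d⟩ hp
    simp only [Finset.mem_sigma, Finset.mem_Icc, Nat.mem_divisors] at hp
    obtain ⟨-, hdvd, -⟩ := hp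
    simp only
    rw [Nat.mul_div_cancel' hdvd]
  · rintro ⟨d, m⟩ hp
    simp only [Finset.mem_sigma, Finset.mem_Icc, Nat.mem_divisors] at hp
    obtain ⟨⟨hd1, -⟩, -, -⟩ := hp
    simp only
    rw [Nat.mul_div_cancel_left m (by omega : 0 < d)]
  · rintro ⟨n, d⟩ _
    rfl

lemma bern (x : ℝ) (hx : 0 ≤ x) (k : ℕ) :
    x ^ (k + 1) + (k + 1) * x ^ k ≤ (x + 1) ^ (k + 1) := by
  rcases eq_or_lt_of_le hx with h | h
  · subst h
    rcases Nat.eq_zero_or_pos k with hk | hk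
    · subst hk; norm_num
    · rw [zero_pow (by omega), zero_pow (by omega)]
      norm_num
  · have h1 : (1 : ℝ) + (k + 1) * (1 / x) ≤ (1 + 1 / x) ^ (k + 1) := by
      have hx' : (0 : ℝ) ≤ 1 / x := by positivity
      have := one_add_mul_le_pow (a := 1 / x) (by linarith : (-2:ℝ) ≤ 1 / x) (k + 1)
      convert this using 2
      · rfl
      push_cast; ring
    have h2 : x ^ (k + 1) * (1 + (k + 1) * (1 / x)) ≤ x ^ (k + 1) * (1 + 1 / x) ^ (k + 1) :=
      mul_le_mul_of_nonneg_left h1 (by positivity)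
    calc x ^ (k + 1) + (k + 1) * x ^ k
        = x ^ (k + 1) * (1 + (k + 1) * (1 / x)) := by
          field_simp; ring
      _ ≤ x ^ (k + 1) * (1 + 1 / x) ^ (k + 1) := h2
      _ = (x + 1) ^ (k + 1) := by
          rw [← mul_pow]
          congr 1
          field_simp

lemma g_antitone {N : ℕ} (hN : 1 ≤ N) (k : ℕ) :
    AntitoneOn (fun t : ℝ => (Real.log N - Real.log t + k) ^ k / t) (Set.Icc 1 N) := by
  intro x hx y hy hxy
  obtain ⟨hx1, hxN⟩ := hx
  obtain ⟨hy1, hyN⟩ := hy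
  have hx0 : (0:ℝ) < x := by linarith
  have hy0 : (0:ℝ) < y := by linarith
  have hly : Real.log y ≤ Real.log N := Real.log_le_log hy0 hyN
  have hlx : Real.log x ≤ Real.log y := Real.log_le_log hx0 hxy
  have hbase_y : (0:ℝ) ≤ Real.log N - Real.log y + k := by
    have : (0:ℝ) ≤ (k:ℝ) := Nat.cast_nonneg k
    linarith
  have hbase_x : (0:ℝ) ≤ Real.log N - Real.log x + k := by
    have hk : (0:ℝ) ≤ (k:ℝ) := Nat.cast_nonneg k
    have : Real.log x ≤ Real.log N := le_trans hlx hly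
    linarith
  exact div_le_div₀ (pow_nonneg hbase_x k) (pow_le_pow_left₀ hbase_y (by linarith) k) hx0 hxy

lemma integral_g {N : ℕ} (hN : 1 ≤ N) (k : ℕ) :
    ∫ t in (1:ℝ)..N, (Real.log N - Real.log t + k) ^ k / t
      = ((Real.log N + k) ^ (k + 1) - (k:ℝ) ^ (k + 1)) / (k + 1) := by
  have hN1 : (1:ℝ) ≤ N := by exact_mod_cast hN
  have huIcc : Set.uIcc (1:ℝ) (N:ℝ) = Set.Icc (1:ℝ) (N:ℝ) := Set.uIcc_of_le hN1
  have hderiv : ∀ x ∈ Set.uIcc (1:ℝ) N,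
      HasDerivAt (fun t : ℝ => -((Real.log N - Real.log t + k) ^ (k + 1)) / (k + 1))
        ((Real.log N - Real.log x + k) ^ k / x) x := by
    intro x hx
    rw [huIcc] at hx
    have hx0 : (0:ℝ) < x := by linarith [hx.1]
    have h1 : HasDerivAt (fun t : ℝ => Real.log N - Real.log t + k) (-x⁻¹) x := by
      have := ((Real.hasDerivAt_log hx0.ne').const_sub (Real.log N)).add_const (k:ℝ)
      convert this using 1
    have h2 := (h1.pow (k + 1)).div_const ((k:ℝ) + 1)
    have h3 := h2.neg
    convert h3 using 1
    · rfl
    · rfl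
    · funext t; simp only [Pi.neg_apply, Pi.pow_apply]; ring
    · simp only [Nat.add_sub_cancel]; push_cast
      field_simp
  have hcont : ContinuousOn (fun t : ℝ => (Real.log N - Real.log t + k) ^ k / t)
      (Set.uIcc (1:ℝ) N) := by
    rw [huIcc]
    apply ContinuousOn.div
    · apply ContinuousOn.pow
      apply ContinuousOn.add
      · exact continuousOn_const.sub (Real.continuousOn_log.mono (fun x hx => by
          simp only [Set.mem_compl_iff, Set.mem_singleton_iff]
          intro h; rw [h] at hx; exact absurd hx.1 (by norm_num)))
      · exact continuousOn_const
    · exact continuousOn_id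
    · intro x hx; exact ne_of_gt (by linarith [hx.1])
  rw [intervalIntegral.integral_eq_sub_of_hasDerivAt hderiv
    (hcont.intervalIntegrable)]
  rw [Real.log_one]
  have h5 : Real.log N - Real.log N + (k:ℝ) = k := by ring
  rw [h5]
  ring

lemma sum_g_le {N : ℕ} (hN : 1 ≤ N) (k : ℕ) :
    ∑ d ∈ Finset.Icc 1 N, (Real.log N - Real.log d + k) ^ k / d
      ≤ (Real.log N + k) ^ k
        + ((Real.log N + k) ^ (k + 1) - (k:ℝ) ^ (k + 1)) / (k + 1) := by
  have hN1 : (1:ℝ) ≤ N := by exact_mod_cast hN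
  have hsplit : Finset.Icc 1 N = insert 1 (Finset.Icc 2 N) := by
    ext x; simp only [Finset.mem_Icc, Finset.mem_insert]; omega
  rw [hsplit, Finset.sum_insert (by simp)]
  have hg1 : (Real.log N - Real.log (1:ℕ) + k) ^ k / ((1:ℕ):ℝ) = (Real.log N + k) ^ k := by
    simp [Real.log_one]
  rw [hg1]
  apply add_le_add_right
  rw [← integral_g hN k]
  have hcast : (1:ℝ) + ((N - 1 : ℕ):ℝ) = N := by
    have : (((N - 1 : ℕ)):ℝ) = (N:ℝ) - 1 := by
      rw [Nat.cast_sub hN]; simp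
    rw [this]; ring
  have hanti : AntitoneOn (fun t : ℝ => (Real.log N - Real.log t + k) ^ k / t)
      (Set.Icc 1 (1 + ((N - 1 : ℕ):ℝ))) := by
    rw [hcast]; exact g_antitone hN k
  have h := hanti.sum_le_integral
  rw [hcast] at h
  refine le_trans ?_ h
  rw [← Finset.Ico_add_one_right_eq_Icc, Finset.sum_Ico_eq_sum_range]
  have hcard : N + 1 - 2 = N - 1 := by omega
  rw [hcard]
  apply le_of_eq
  apply Finset.sum_congr rfl
  intro i _
  have h2 : ((2 + i : ℕ):ℝ) = 1 + ((i + 1 : ℕ):ℝ) := by push_cast; ring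
  rw [h2]

lemma sum_tau_le (k : ℕ) : ∀ (N : ℕ), 1 ≤ N →
    (∑ n ∈ Finset.Icc 1 N, (tau (k + 1) n : ℝ))
      ≤ N * (Real.log N + k) ^ k / (Nat.factorial k) := by
  induction k with
  | zero =>
    intro N hN
    have h1 : ∀ n ∈ Finset.Icc 1 N, ((tau 1 n : ℕ):ℝ) = 1 := by
      intro n hn
      rw [tau_one_eq (Finset.mem_Icc.mp hn).1]
      norm_num
    rw [Finset.sum_congr rfl h1, Finset.sum_const, Nat.card_Icc]
    simp
  | succ k ih =>
    intro N hN
    have hN1 : (1:ℝ) ≤ N := by exact_mod_cast hN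
    have hN0 : (0:ℝ) < N := by linarith
    have hlogN : 0 ≤ Real.log N := Real.log_nonneg hN1
    have hswap := congrArg (Nat.cast : ℕ → ℝ) (swap_sum k N)
    push_cast at hswap
    have hfac : (0:ℝ) < (Nat.factorial k : ℝ) := by
      exact_mod_cast Nat.factorial_pos k
    calc ∑ n ∈ Finset.Icc 1 N, (tau (k + 1 + 1) n : ℝ)
        = ∑ d ∈ Finset.Icc 1 N, ∑ m ∈ Finset.Icc 1 (N / d), (tau (k + 1) m : ℝ) := hswap
      _ ≤ ∑ d ∈ Finset.Icc 1 N,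
            (N:ℝ) / (Nat.factorial k) * ((Real.log N - Real.log d + k) ^ k / d) := by
          apply Finset.sum_le_sum
          intro d hd
          obtain ⟨hd1, hdN⟩ := Finset.mem_Icc.mp hd
          have hd0 : (0:ℝ) < d := by exact_mod_cast hd1
          have hM1 : 1 ≤ N / d := Nat.div_pos hdN hd1
          have hM0 : (0:ℝ) < ((N / d : ℕ):ℝ) := by exact_mod_cast hM1
          have hMle : ((N / d : ℕ):ℝ) ≤ (N:ℝ) / d := Nat.cast_div_le
          have hlogM : Real.log ((N / d : ℕ):ℝ) ≤ Real.log N - Real.log d := by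
            rw [← Real.log_div hN0.ne' hd0.ne']
            exact Real.log_le_log hM0 hMle
          have hlogM0 : 0 ≤ Real.log ((N / d : ℕ):ℝ) :=
            Real.log_nonneg (by exact_mod_cast hM1)
          calc ∑ m ∈ Finset.Icc 1 (N / d), (tau (k + 1) m : ℝ)
              ≤ ((N / d : ℕ):ℝ) * (Real.log ((N / d : ℕ):ℝ) + k) ^ k / (Nat.factorial k) :=
                ih (N / d) hM1
            _ ≤ ((N:ℝ) / d) * (Real.log N - Real.log d + k) ^ k / (Nat.factorial k) := by
                apply (div_le_div_iff_of_pos_right hfac).mpr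
                have hk0 : (0:ℝ) ≤ (k:ℝ) := Nat.cast_nonneg k
                apply mul_le_mul hMle
                  (pow_le_pow_left₀ (by linarith) (by linarith) k)
                  (by positivity) (by positivity)
            _ = (N:ℝ) / (Nat.factorial k) * ((Real.log N - Real.log d + k) ^ k / d) := by
                ring
      _ = (N:ℝ) / (Nat.factorial k)
            * ∑ d ∈ Finset.Icc 1 N, (Real.log N - Real.log d + k) ^ k / d := by
          rw [Finset.mul_sum]
      _ ≤ (N:ℝ) / (Nat.factorial k)
            * ((Real.log N + k) ^ k
              + ((Real.log N + k) ^ (k + 1) - (k:ℝ) ^ (k + 1)) / (k + 1)) := by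
          apply mul_le_mul_of_nonneg_left (sum_g_le hN k) (by positivity)
      _ ≤ N * (Real.log N + (k + 1 : ℕ)) ^ (k + 1) / (Nat.factorial (k + 1)) := by
          have hA : (0:ℝ) ≤ Real.log N + k := by positivity
          have hk1 : (0:ℝ) < (k:ℝ) + 1 := by positivity
          have hcore : (Real.log N + k) ^ k
              + ((Real.log N + k) ^ (k + 1) - (k:ℝ) ^ (k + 1)) / ((k:ℝ) + 1)
              ≤ (Real.log N + k + 1) ^ (k + 1) / ((k:ℝ) + 1) := by
            rw [le_div_iff₀ hk1]
            have hexpand : ((Real.log N + k) ^ k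
                + ((Real.log N + k) ^ (k + 1) - (k:ℝ) ^ (k + 1)) / ((k:ℝ) + 1)) * ((k:ℝ) + 1)
                = ((k:ℝ) + 1) * (Real.log N + k) ^ k
                  + (Real.log N + k) ^ (k + 1) - (k:ℝ) ^ (k + 1) := by
              field_simp
              ring
            rw [hexpand]
            have hb := bern (Real.log N + k) hA k
            have hkpow : (0:ℝ) ≤ (k:ℝ) ^ (k + 1) := by positivity
            linarith
          calc (N:ℝ) / (Nat.factorial k)
                * ((Real.log N + k) ^ k
                  + ((Real.log N + k) ^ (k + 1) - (k:ℝ) ^ (k + 1)) / (k + 1))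
              ≤ (N:ℝ) / (Nat.factorial k)
                  * ((Real.log N + k + 1) ^ (k + 1) / ((k:ℝ) + 1)) := by
                apply mul_le_mul_of_nonneg_left hcore (by positivity)
            _ = N * (Real.log N + (k + 1 : ℕ)) ^ (k + 1) / (Nat.factorial (k + 1)) := by
                rw [Nat.factorial_succ]
                push_cast
                field_simp
                ring

theorem tau'_sq_sum_bound (c : ℝ) (hc : 0 < c) (r N : ℕ) (hr : 1 ≤ r) (hN : 1 ≤ N)
    (hrN : (r : ℝ) - 1 ≤ c * Real.log N) :
    ∑ a ∈ Finset.Icc 1 (N ^ r), ((tau' r N a : ℝ)) ^ 2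
      ≤ (((1 + c) ^ (r - 1) / (Nat.factorial (r - 1) : ℝ)) * (N : ℝ)
          * (Real.log N) ^ (r - 1)) ^ r := by
  set k := r - 1 with hk
  have hrk : r = k + 1 := by omega
  have hN1 : (1:ℝ) ≤ N := by exact_mod_cast hN
  have hlogN : 0 ≤ Real.log N := Real.log_nonneg hN1
  have hkc : (k:ℝ) ≤ c * Real.log N := by
    have hcast : ((k:ℕ):ℝ) = (r:ℝ) - 1 := by rw [hrk]; push_cast; ring
    linarith [hrN]
  have hfac : (0:ℝ) < (Nat.factorial k : ℝ) := by exact_mod_cast Nat.factorial_pos k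
  have hnat := sum_tau'_sq_le r N hN
  have h1 : ∑ a ∈ Finset.Icc 1 (N ^ r), ((tau' r N a : ℝ)) ^ 2
      ≤ (∑ n ∈ Finset.Icc 1 N, (tau r n : ℝ)) ^ r := by
    have h := (Nat.cast_le (α := ℝ)).mpr hnat
    push_cast at h
    exact h
  have h2 : (∑ n ∈ Finset.Icc 1 N, (tau r n : ℝ))
      ≤ (N:ℝ) * (Real.log N + k) ^ k / (Nat.factorial k) := by
    have := sum_tau_le k N hN
    rw [hrk]
    exact this
  have h3 : (N:ℝ) * (Real.log N + k) ^ k / (Nat.factorial k)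
      ≤ ((1 + c) ^ k / (Nat.factorial k : ℝ)) * (N:ℝ) * (Real.log N) ^ k := by
    have hb : Real.log N + (k:ℝ) ≤ (1 + c) * Real.log N := by linarith
    have hbase : (0:ℝ) ≤ Real.log N + (k:ℝ) := by positivity
    calc (N:ℝ) * (Real.log N + k) ^ k / (Nat.factorial k)
        ≤ (N:ℝ) * ((1 + c) * Real.log N) ^ k / (Nat.factorial k) := by
          apply (div_le_div_iff_of_pos_right hfac).mpr
          apply mul_le_mul_of_nonneg_left (pow_le_pow_left₀ hbase hb k) (by positivity)
      _ = ((1 + c) ^ k / (Nat.factorial k : ℝ)) * (N:ℝ) * (Real.log N) ^ k := by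
          rw [mul_pow]; ring
  have hsumnn : (0:ℝ) ≤ ∑ n ∈ Finset.Icc 1 N, (tau r n : ℝ) :=
    Finset.sum_nonneg fun n _ => Nat.cast_nonneg _
  calc ∑ a ∈ Finset.Icc 1 (N ^ r), ((tau' r N a : ℝ)) ^ 2
      ≤ (∑ n ∈ Finset.Icc 1 N, (tau r n : ℝ)) ^ r := h1
    _ ≤ (((1 + c) ^ k / (Nat.factorial k : ℝ)) * (N : ℝ) * (Real.log N) ^ k) ^ r :=
        pow_le_pow_left₀ hsumnn (le_trans h2 h3) r
end

section
/- For all real K > 0 one has f₁(K) + K/4 = (1/K)·(log(K²/2 + 1) + 1); the function K ↦ (1/K)·(log(K²/2 + 1) + 1) is strictly decreasing on (0, ∞) and tends to 0 as K → ∞; consequently f₁ is strictly decreasing on (0, ∞), f₁(K) < 0 for all K ≥ 3.42, and likewise f₂(K) < 0 for all K ≥ 4.8365. -/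
/-- The function `f₁(K) = -K/4 + (1/K)·log(1 + 2/K²) - (log 2)/K + 1/K + (2 log K)/K`. -/
noncomputable def f₁ (K : ℝ) : ℝ :=
  -K / 4 + (1 / K) * Real.log (1 + 2 / K ^ 2) - Real.log 2 / K + 1 / K + 2 * Real.log K / K

/-- The function `f₂(K) = -K/4 + (2/K)·log(1 + 4/K²) - (2/K)·log 4 + 2/K + (4 log K)/K`. -/
noncomputable def f₂ (K : ℝ) : ℝ :=
  -K / 4 + (2 / K) * Real.log (1 + 4 / K ^ 2) - (2 / K) * Real.log 4 + 2 / K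
    + 4 * Real.log K / K

/-- The auxiliary function `K ↦ (1/K)·(log(K²/2 + 1) + 1)`. -/
noncomputable def g₁ (K : ℝ) : ℝ := (1 / K) * (Real.log (K ^ 2 / 2 + 1) + 1)

open Real Filter Set

/-- Generic auxiliary function; `g₁ = gAux 1`, and `gAux 2` plays the same role for `f₂`. -/
noncomputable def gAux (c K : ℝ) : ℝ := (c / K) * (Real.log (K ^ 2 / (2 * c) + 1) + 1)

lemma key_ineq {t : ℝ} (ht : 1 < t) : t - 2 < t * Real.log t := by
  have h1 : Real.log (1 / t) < 1 / t - 1 := by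
    apply Real.log_lt_sub_one_of_pos (by positivity)
    intro h
    have : t = 1 := by
      field_simp at h
      linarith
    linarith
  rw [Real.log_div one_ne_zero (by linarith), Real.log_one] at h1
  have ht0 : 0 < t := by linarith
  have h2 : 1 - 1 / t < Real.log t := by linarith
  have h3 : t * (1 - 1 / t) < t * Real.log t := by
    exact mul_lt_mul_of_pos_left h2 ht0
  have h4 : t * (1 - 1 / t) = t - 1 := by field_simp
  linarith

lemma gAux_hasDerivAt {c : ℝ} (hc : 0 < c) {K : ℝ} (hK : 0 < K) :
    HasDerivAt (gAux c)
      (-(c / K ^ 2) * (Real.log (K ^ 2 / (2 * c) + 1) + 1)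
        + (c / K) * ((2 * K / (2 * c)) / (K ^ 2 / (2 * c) + 1))) K := by
  have hK0 : K ≠ 0 := ne_of_gt hK
  have hpos : 0 < K ^ 2 / (2 * c) + 1 := by positivity
  have h1 : HasDerivAt (fun K : ℝ => c / K) (-(c / K ^ 2)) K := by
    have := (hasDerivAt_inv hK0).const_mul c
    have heq : c * -(K ^ 2)⁻¹ = -(c / K ^ 2) := by field_simp
    rw [heq] at this
    exact this.congr_deriv rfl |>.congr_of_eventuallyEq
      (by filter_upwards with y using by rw [div_eq_mul_inv])
  have h2 : HasDerivAt (fun K : ℝ => K ^ 2 / (2 * c) + 1) (2 * K / (2 * c)) K := by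
    have := ((hasDerivAt_pow 2 K).div_const (2 * c)).add_const 1
    simpa using this
  have h3 : HasDerivAt (fun K : ℝ => Real.log (K ^ 2 / (2 * c) + 1) + 1)
      ((2 * K / (2 * c)) / (K ^ 2 / (2 * c) + 1)) K := by
    exact ((h2.log (ne_of_gt hpos))).add_const 1
  show HasDerivAt (fun K : ℝ => (c / K) * (Real.log (K ^ 2 / (2 * c) + 1) + 1)) _ K
  exact h1.mul h3

lemma gAux_deriv_neg {c : ℝ} (hc : 0 < c) {K : ℝ} (hK : 0 < K) :
    deriv (gAux c) K < 0 := by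
  rw [(gAux_hasDerivAt hc hK).deriv]
  set t : ℝ := K ^ 2 / (2 * c) + 1 with ht_def
  have ht : 1 < t := by
    have : 0 < K ^ 2 / (2 * c) := by positivity
    simp only [ht_def]; linarith
  have ht0 : 0 < t := by linarith
  have hkey := key_ineq ht
  have hK2 : K ^ 2 = 2 * c * (t - 1) := by
    simp only [ht_def]; field_simp; ring
  -- expression simplifies to  1/t - c*(log t + 1)/K^2  (times positive stuff)
  have hc2 : (0:ℝ) < 2 * c := by linarith
  have hKne : K ≠ 0 := ne_of_gt hK
  have expr : -(c / K ^ 2) * (Real.log t + 1) + (c / K) * ((2 * K / (2 * c)) / t)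
      = (1 / t) - c * (Real.log t + 1) / K ^ 2 := by
    field_simp
    ring
  rw [expr]
  rw [sub_neg]
  rw [div_lt_div_iff₀ ht0 (by positivity)]
  -- 1 * K^2 < c*(log t + 1) * t
  rw [hK2]
  nlinarith [mul_lt_mul_of_pos_left hkey hc]

lemma gAux_anti {c : ℝ} (hc : 0 < c) : StrictAntiOn (gAux c) (Set.Ioi 0) := by
  apply strictAntiOn_of_deriv_neg (convex_Ioi 0)
  · apply ContinuousOn.mul
    · exact continuousOn_const.div continuousOn_id (fun x hx => ne_of_gt hx)
    · apply ContinuousOn.add _ continuousOn_const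
      apply ContinuousOn.log
      · fun_prop
      · intro x hx
        have : (0:ℝ) < x ^ 2 / (2 * c) + 1 := by
          have hx0 : (0:ℝ) < x := hx
          positivity
        exact ne_of_gt this
  · intro x hx
    rw [interior_Ioi] at hx
    exact gAux_deriv_neg hc hx

lemma g₁_eq_gAux : g₁ = gAux 1 := by
  funext K
  simp [g₁, gAux]

lemma f₁_add (K : ℝ) (hK : 0 < K) : f₁ K + K / 4 = g₁ K := by
  have hKne : K ≠ 0 := ne_of_gt hK
  have h1 : K ^ 2 / 2 + 1 = (1 + 2 / K ^ 2) * (K ^ 2 / 2) := by field_simp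
  have h2 : (0:ℝ) < 1 + 2 / K ^ 2 := by positivity
  have h3 : (0:ℝ) < K ^ 2 / 2 := by positivity
  rw [g₁, h1, Real.log_mul (ne_of_gt h2) (ne_of_gt h3),
    Real.log_div (by positivity) (by norm_num), Real.log_pow]
  rw [f₁]
  push_cast
  field_simp
  ring

lemma f₂_add (K : ℝ) (hK : 0 < K) : f₂ K + K / 4 = gAux 2 K := by
  have hKne : K ≠ 0 := ne_of_gt hK
  have h1 : K ^ 2 / (2 * 2) + 1 = (1 + 4 / K ^ 2) * (K ^ 2 / 4) := by field_simp; ring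
  have h2 : (0:ℝ) < 1 + 4 / K ^ 2 := by positivity
  have h3 : (0:ℝ) < K ^ 2 / 4 := by positivity
  rw [gAux, h1, Real.log_mul (ne_of_gt h2) (ne_of_gt h3),
    Real.log_div (by positivity) (by norm_num), Real.log_pow]
  rw [f₂]
  push_cast
  field_simp
  ring

lemma exp_upper {x : ℝ} (h1 : 0 ≤ x) (h2 : x ≤ 1) :
    Real.exp x ≤ 1 + x + x ^ 2 / 2 + x ^ 3 / 6 + x ^ 4 * 5 / 96 := by
  have := Real.exp_bound' h1 h2 (n := 4) (by norm_num)
  have hsum : (∑ m ∈ Finset.range 4, x ^ m / m.factorial) = 1 + x + x ^ 2 / 2 + x ^ 3 / 6 := by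
    simp [Finset.sum_range_succ, Nat.factorial]
  rw [hsum] at this
  calc Real.exp x ≤ 1 + x + x ^ 2 / 2 + x ^ 3 / 6 + x ^ 4 * (4 + 1) / (Nat.factorial 4 * 4) :=
        this
    _ = 1 + x + x ^ 2 / 2 + x ^ 3 / 6 + x ^ 4 * 5 / 96 := by norm_num [Nat.factorial]

lemma log_lt_of_lt_exp {x y : ℝ} (hx : 0 < x) (h : x * Real.exp (2 - y) < Real.exp 1 ^ 2) :
    Real.log x < y := by
  have hexp : Real.exp 1 ^ 2 = Real.exp y * Real.exp (2 - y) := by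
    rw [← Real.exp_add]
    rw [show y + (2 - y) = (2:ℝ) by ring]
    rw [show (2:ℝ) = (1:ℝ) + 1 by norm_num, Real.exp_add]
    ring
  have hx' : x < Real.exp y := by
    rw [hexp] at h
    exact lt_of_mul_lt_mul_right h (Real.exp_pos _).le
  calc Real.log x < Real.log (Real.exp y) := Real.log_lt_log hx hx'
    _ = y := Real.log_exp y

lemma log_num1 : Real.log 6.8482 < 1.9241 := by
  apply log_lt_of_lt_exp (by norm_num)
  have h : (2:ℝ) - 1.9241 = 0.0759 := by norm_num
  rw [h]
  have hb := exp_upper (x := 0.0759) (by norm_num) (by norm_num)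
  have he : (2.7182818283:ℝ) < Real.exp 1 := Real.exp_one_gt_d9
  nlinarith [Real.exp_pos (0.0759:ℝ)]

lemma log_num2 : Real.log 6.8479330625 < 1.92396653125 := by
  apply log_lt_of_lt_exp (by norm_num)
  have h : (2:ℝ) - 1.92396653125 = 0.07603346875 := by norm_num
  rw [h]
  have hb := exp_upper (x := 0.07603346875) (by norm_num) (by norm_num)
  have he : (2.7182818283:ℝ) < Real.exp 1 := Real.exp_one_gt_d9
  nlinarith [Real.exp_pos (0.07603346875:ℝ)]

lemma g₁_tendsto : Filter.Tendsto g₁ Filter.atTop (nhds 0) := by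
  have hlim : Filter.Tendsto (fun K : ℝ => 2 * (Real.log K / K) + 1 / K)
      Filter.atTop (nhds 0) := by
    have h1 : Filter.Tendsto (fun K : ℝ => Real.log K / K) Filter.atTop (nhds 0) := by
      have := Real.tendsto_pow_log_div_mul_add_atTop 1 0 1 one_ne_zero
      simpa using this
    have h2 : Filter.Tendsto (fun K : ℝ => 1 / K) Filter.atTop (nhds 0) := by
      simpa using tendsto_inv_atTop_zero
    have := (h1.const_mul 2).add h2
    simpa using this
  apply squeeze_zero' (g := fun K : ℝ => 2 * (Real.log K / K) + 1 / K)
  · filter_upwards [eventually_ge_atTop (1:ℝ)] with K hK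
    have hK0 : (0:ℝ) < K := by linarith
    have : (0:ℝ) ≤ Real.log (K ^ 2 / 2 + 1) := by
      apply Real.log_nonneg
      nlinarith
    rw [g₁]
    positivity
  · filter_upwards [eventually_ge_atTop (2:ℝ)] with K hK
    have hK0 : (0:ℝ) < K := by linarith
    have hle : K ^ 2 / 2 + 1 ≤ K ^ 2 := by nlinarith
    have hlog : Real.log (K ^ 2 / 2 + 1) ≤ 2 * Real.log K := by
      calc Real.log (K ^ 2 / 2 + 1) ≤ Real.log (K ^ 2) :=
            Real.log_le_log (by positivity) hle
        _ = 2 * Real.log K := by rw [Real.log_pow]; norm_num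
    rw [g₁]
    have h1 : (1 / K) * (Real.log (K ^ 2 / 2 + 1) + 1) ≤ (1 / K) * (2 * Real.log K + 1) :=
      mul_le_mul_of_nonneg_left (by linarith) (by positivity)
    calc (1 / K) * (Real.log (K ^ 2 / 2 + 1) + 1) ≤ (1 / K) * (2 * Real.log K + 1) := h1
      _ = 2 * (Real.log K / K) + 1 / K := by field_simp
  · exact hlim

theorem calculus_facts :
    (∀ K : ℝ, 0 < K → f₁ K + K / 4 = g₁ K) ∧
    StrictAntiOn g₁ (Set.Ioi 0) ∧
    Filter.Tendsto g₁ Filter.atTop (nhds 0) ∧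
    StrictAntiOn f₁ (Set.Ioi 0) ∧
    (∀ K : ℝ, 3.42 ≤ K → f₁ K < 0) ∧
    (∀ K : ℝ, 4.8365 ≤ K → f₂ K < 0) := by
  have hg₁_anti : StrictAntiOn g₁ (Set.Ioi 0) := by
    rw [g₁_eq_gAux]; exact gAux_anti one_pos
  refine ⟨f₁_add, hg₁_anti, g₁_tendsto, ?_, ?_, ?_⟩
  · intro a ha b hb hab
    have h1 := f₁_add a (by exact ha)
    have h2 := f₁_add b (by exact hb)
    have := hg₁_anti ha hb hab
    linarith
  · intro K hK
    have hK0 : (0:ℝ) < K := by linarith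
    have hmem : (3.42:ℝ) ∈ Set.Ioi (0:ℝ) := by norm_num
    have hKmem : K ∈ Set.Ioi (0:ℝ) := hK0
    have hle : g₁ K ≤ g₁ 3.42 :=
      hg₁_anti.antitoneOn hmem hKmem hK
    have hval : g₁ 3.42 < 3.42 / 4 := by
      rw [g₁]
      have h : (3.42:ℝ) ^ 2 / 2 + 1 = 6.8482 := by norm_num
      rw [h]
      have := log_num1
      nlinarith
    have := f₁_add K hK0
    linarith
  · intro K hK
    have hK0 : (0:ℝ) < K := by linarith
    have hmem : (4.8365:ℝ) ∈ Set.Ioi (0:ℝ) := by norm_num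
    have hKmem : K ∈ Set.Ioi (0:ℝ) := hK0
    have hle : gAux 2 K ≤ gAux 2 4.8365 :=
      (gAux_anti two_pos).antitoneOn hmem hKmem hK
    have hval : gAux 2 4.8365 < 4.8365 / 4 := by
      rw [gAux]
      have h : (4.8365:ℝ) ^ 2 / (2 * 2) + 1 = 6.8479330625 := by norm_num
      rw [h]
      have := log_num2
      nlinarith
    have := f₂_add K hK0
    linarith
end
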